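/- Let A be a real tensor of size n×n×n₃, invertible with inverse A⁻¹, let E be a tensor of size n×n×n₃, and suppose B = A+E (entrywise sum) is invertible with inverse B⁻¹. Then ‖A⁻¹−B⁻¹‖_F / ‖A⁻¹‖_F ≤ (‖A‖_F·‖B⁻¹‖₂)·‖E‖₂/‖A‖_F and ‖A⁻¹−B⁻¹‖₂ / ‖A⁻¹‖₂ ≤ (‖A‖₂·‖B⁻¹‖₂)·‖E‖₂/‖A‖₂. -/

import Mathlib

open scoped Matrix.Norms.L2Operator

noncomputable section

/-- The t-product of third-order tensors. -/
def tProd {n₁ n₂ n₃ n₄ : ℕ} [NeZero n₃] (A : Fin n₁ → Fin n₂ → ZMod n₃ → ℝ)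
    (B : Fin n₂ → Fin n₄ → ZMod n₃ → ℝ) : Fin n₁ → Fin n₄ → ZMod n₃ → ℝ :=
  fun i j k => ∑ l : Fin n₂, ∑ m : ZMod n₃, A i l (k - m) * B l j m

/-- The Frobenius norm of a third-order tensor. -/
def frobNorm {n₁ n₂ n₃ : ℕ} [NeZero n₃] (A : Fin n₁ → Fin n₂ → ZMod n₃ → ℝ) : ℝ :=
  Real.sqrt (∑ i : Fin n₁, ∑ j : Fin n₂, ∑ k : ZMod n₃, (A i j k) ^ 2)

/-- The block circulant matrix of a third-order tensor. -/
def bcirc {n₁ n₂ n₃ : ℕ} (A : Fin n₁ → Fin n₂ → ZMod n₃ → ℝ) :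
    Matrix (Fin n₁ × ZMod n₃) (Fin n₂ × ZMod n₃) ℝ :=
  fun p q => A p.1 q.1 (p.2 - q.2)

/-- The spectral norm of a third-order tensor: the L2 operator norm of its
block circulant matrix. -/
def specNorm {n₁ n₂ n₃ : ℕ} [NeZero n₃] (A : Fin n₁ → Fin n₂ → ZMod n₃ → ℝ) : ℝ :=
  ‖bcirc A‖

/-- The identity tensor. -/
def tId (n n₃ : ℕ) : Fin n → Fin n → ZMod n₃ → ℝ :=
  fun i j k => if i = j ∧ k = 0 then 1 else 0

/-- The tensor transpose. -/
def tTrans {n₁ n₂ n₃ : ℕ} (A : Fin n₁ → Fin n₂ → ZMod n₃ → ℝ) :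
    Fin n₂ → Fin n₁ → ZMod n₃ → ℝ :=
  fun i j k => A j i (-k)

/-- `X` is a Moore-Penrose inverse of `A`. -/
def IsMPInv {n₁ n₂ n₃ : ℕ} [NeZero n₃] (A : Fin n₁ → Fin n₂ → ZMod n₃ → ℝ)
    (X : Fin n₂ → Fin n₁ → ZMod n₃ → ℝ) : Prop :=
  tProd (tProd A X) A = A ∧ tProd (tProd X A) X = X ∧
    tTrans (tProd A X) = tProd A X ∧ tTrans (tProd X A) = tProd X A

/-- The `i`-th DFT block of a third-order tensor. -/
def dftBlock {n₁ n₂ n₃ : ℕ} [NeZero n₃] (A : Fin n₁ → Fin n₂ → ZMod n₃ → ℝ) (i : ZMod n₃) :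
    Matrix (Fin n₁) (Fin n₂) ℂ :=
  fun p q => ∑ k : ZMod n₃,
    Complex.exp (-2 * Real.pi * Complex.I * (i.val : ℂ) * (k.val : ℂ) / (n₃ : ℂ)) * (A p q k : ℂ)

end

/-!
Pass to block circulant matrices, where the t-product becomes the matrix product and the
identity tensor the identity matrix. There `A⁻¹ - B⁻¹ = B⁻¹ * ((A + E) - A) * A⁻¹ = B⁻¹ * E * A⁻¹`,
so the spectral bound is submultiplicativity of the operator norm. For the Frobenius bound,
unfold a tensor into the matrix of its frontal slices stacked vertically: the t-product acts
on unfoldings by `unfold (X * Y) = bcirc X * unfold Y`, and applying a matrix to each column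
of a matrix scales its Frobenius norm by at most the operator norm of that matrix.
-/

namespace Matrix

variable {l m n : Type*} [Fintype l] [Fintype m] [Fintype n] [DecidableEq m]

theorem sum_sq_mul_apply_le_l2_opNorm_sq_mul (M : Matrix l m ℝ) (X : Matrix m n ℝ) :
    ∑ i, ∑ j, (M * X) i j ^ 2 ≤ ‖M‖ ^ 2 * ∑ i, ∑ j, X i j ^ 2 := by
  have column (j : n) : ∑ i, (M * X) i j ^ 2 ≤ ‖M‖ ^ 2 * ∑ i, X i j ^ 2 := by
    have h := pow_le_pow_left₀ (norm_nonneg _) (M.l2_opNorm_mulVec (WithLp.toLp 2 fun i => X i j)) 2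
    simpa [mul_pow, EuclideanSpace.norm_sq_eq, mul_apply, mulVec, dotProduct] using h
  rw [Finset.sum_comm, Finset.sum_comm (f := fun i j => X i j ^ 2), Finset.mul_sum]
  exact Finset.sum_le_sum fun j _ => column j

end Matrix

section Tensor

variable {n₁ n₂ n₃ n₄ : ℕ}

/-- The frontal slices of `A` stacked vertically, i.e. the first block column of `bcirc A`. -/
def unfold (A : Fin n₁ → Fin n₂ → ZMod n₃ → ℝ) : Matrix (Fin n₁ × ZMod n₃) (Fin n₂) ℝ :=
  fun p j => A p.1 j p.2

theorem bcirc_injective :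
    Function.Injective (bcirc : (Fin n₁ → Fin n₂ → ZMod n₃ → ℝ) → _) := by
  intro A B h
  funext i j k
  simpa [bcirc] using congrFun (congrFun h (i, k)) (j, 0)

theorem bcirc_add (A B : Fin n₁ → Fin n₂ → ZMod n₃ → ℝ) : bcirc (A + B) = bcirc A + bcirc B :=
  rfl

theorem bcirc_sub (A B : Fin n₁ → Fin n₂ → ZMod n₃ → ℝ) : bcirc (A - B) = bcirc A - bcirc B :=
  rfl

theorem bcirc_tId (n : ℕ) : bcirc (tId n n₃) = 1 := by
  ext ⟨i, k⟩ ⟨j, m⟩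
  simp only [bcirc, tId, Matrix.one_apply, Prod.mk.injEq, sub_eq_zero]

variable [NeZero n₃]

theorem bcirc_tProd (A : Fin n₁ → Fin n₂ → ZMod n₃ → ℝ) (B : Fin n₂ → Fin n₄ → ZMod n₃ → ℝ) :
    bcirc (tProd A B) = bcirc A * bcirc B := by
  ext ⟨i, k⟩ ⟨j, m⟩
  simp only [bcirc, tProd, Matrix.mul_apply, Fintype.sum_prod_type]
  refine Finset.sum_congr rfl fun l _ => Fintype.sum_equiv (Equiv.addRight m) _ _ fun m' => ?_
  rw [Equiv.coe_addRight, add_sub_cancel_right, sub_sub, add_comm m m']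

theorem unfold_tProd (A : Fin n₁ → Fin n₂ → ZMod n₃ → ℝ) (B : Fin n₂ → Fin n₄ → ZMod n₃ → ℝ) :
    unfold (tProd A B) = bcirc A * unfold B := by
  ext ⟨i, k⟩ j
  simp only [unfold, tProd, bcirc, Matrix.mul_apply, Fintype.sum_prod_type]

theorem frobNorm_eq_sqrt_unfold (A : Fin n₁ → Fin n₂ → ZMod n₃ → ℝ) :
    frobNorm A = √(∑ p, ∑ j, unfold A p j ^ 2) := by
  simp only [frobNorm, unfold, Fintype.sum_prod_type]
  exact congrArg _ (Finset.sum_congr rfl fun i _ => Finset.sum_comm)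

theorem frobNorm_nonneg (A : Fin n₁ → Fin n₂ → ZMod n₃ → ℝ) : 0 ≤ frobNorm A :=
  Real.sqrt_nonneg _

theorem specNorm_nonneg (A : Fin n₁ → Fin n₂ → ZMod n₃ → ℝ) : 0 ≤ specNorm A :=
  norm_nonneg _

theorem frobNorm_eq_zero {A : Fin n₁ → Fin n₂ → ZMod n₃ → ℝ} : frobNorm A = 0 ↔ A = 0 := by
  rw [frobNorm, Real.sqrt_eq_zero (by positivity)]
  simp (disch := intros; positivity) [Finset.sum_eq_zero_iff_of_nonneg, funext_iff]

theorem specNorm_eq_zero {A : Fin n₁ → Fin n₂ → ZMod n₃ → ℝ} : specNorm A = 0 ↔ A = 0 :=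
  norm_eq_zero.trans (bcirc_injective.eq_iff' rfl)

theorem specNorm_tProd_le (A : Fin n₁ → Fin n₂ → ZMod n₃ → ℝ) (B : Fin n₂ → Fin n₄ → ZMod n₃ → ℝ) :
    specNorm (tProd A B) ≤ specNorm A * specNorm B := by
  simpa only [specNorm, bcirc_tProd] using Matrix.l2_opNorm_mul (bcirc A) (bcirc B)

theorem frobNorm_tProd_le (A : Fin n₁ → Fin n₂ → ZMod n₃ → ℝ) (B : Fin n₂ → Fin n₄ → ZMod n₃ → ℝ) :
    frobNorm (tProd A B) ≤ specNorm A * frobNorm B := by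
  rw [frobNorm_eq_sqrt_unfold, frobNorm_eq_sqrt_unfold, unfold_tProd, specNorm,
    ← Real.sqrt_sq (norm_nonneg (bcirc A)), ← Real.sqrt_mul (sq_nonneg _)]
  exact Real.sqrt_le_sqrt (Matrix.sum_sq_mul_apply_le_l2_opNorm_sq_mul _ _)

theorem ne_zero_of_tProd_eq_tId {n : ℕ} (hn : 0 < n) {A : Fin n → Fin n₂ → ZMod n₃ → ℝ}
    {X : Fin n₂ → Fin n → ZMod n₃ → ℝ} (h : tProd A X = tId n n₃) : A ≠ 0 := by
  rintro rfl
  simpa [tProd, tId] using congrFun (congrFun (congrFun h ⟨0, hn⟩) ⟨0, hn⟩) 0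

theorem sub_eq_tProd_tProd_of_tProd_eq_tId {n : ℕ} {A Ainv E Binv : Fin n → Fin n → ZMod n₃ → ℝ}
    (hA : tProd A Ainv = tId n n₃) (hB : tProd Binv (A + E) = tId n n₃) :
    Ainv - Binv = tProd (tProd Binv E) Ainv := by
  apply bcirc_injective
  have hA' : bcirc A * bcirc Ainv = 1 := by rw [← bcirc_tProd, hA, bcirc_tId]
  have hB' : bcirc Binv * (bcirc A + bcirc E) = 1 := by
    rw [← bcirc_add, ← bcirc_tProd, hB, bcirc_tId]
  calc bcirc (Ainv - Binv)
      = bcirc Binv * (bcirc A + bcirc E) * bcirc Ainv - bcirc Binv * (bcirc A * bcirc Ainv) := by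
        rw [hA', hB', one_mul, mul_one, bcirc_sub]
    _ = bcirc (tProd (tProd Binv E) Ainv) := by
        rw [bcirc_tProd, bcirc_tProd]
        noncomm_ring

end Tensor

theorem inverse_perturbation_bound_general (n n₃ : ℕ) [NeZero n₃] (hn : 0 < n)
    (A Ainv E Binv : Fin n → Fin n → ZMod n₃ → ℝ)
    (hA₁ : tProd A Ainv = tId n n₃)
    (hB₂ : tProd Binv (A + E) = tId n n₃) :
    frobNorm (Ainv - Binv) / frobNorm Ainv ≤
        (frobNorm A * specNorm Binv) * (specNorm E / frobNorm A) ∧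
      specNorm (Ainv - Binv) / specNorm Ainv ≤
        (specNorm A * specNorm Binv) * (specNorm E / specNorm A) := by
  have hA : A ≠ 0 := ne_zero_of_tProd_eq_tId hn hA₁
  have cancel (a : ℝ) (ha : a ≠ 0) :
      a * specNorm Binv * (specNorm E / a) = specNorm Binv * specNorm E := by
    field_simp
  have hBE : 0 ≤ specNorm Binv * specNorm E := mul_nonneg (specNorm_nonneg _) (specNorm_nonneg _)
  rw [cancel _ (frobNorm_eq_zero.not.mpr hA), cancel _ (specNorm_eq_zero.not.mpr hA),
    sub_eq_tProd_tProd_of_tProd_eq_tId hA₁ hB₂]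
  constructor
  · refine div_le_of_le_mul₀ (frobNorm_nonneg _) hBE ?_
    calc frobNorm (tProd (tProd Binv E) Ainv) ≤ specNorm (tProd Binv E) * frobNorm Ainv :=
          frobNorm_tProd_le _ _
      _ ≤ specNorm Binv * specNorm E * frobNorm Ainv :=
          mul_le_mul_of_nonneg_right (specNorm_tProd_le _ _) (frobNorm_nonneg _)
  · refine div_le_of_le_mul₀ (specNorm_nonneg _) hBE ?_
    calc specNorm (tProd (tProd Binv E) Ainv) ≤ specNorm (tProd Binv E) * specNorm Ainv :=
          specNorm_tProd_le _ _
      _ ≤ specNorm Binv * specNorm E * specNorm Ainv :=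
          mul_le_mul_of_nonneg_right (specNorm_tProd_le _ _) (specNorm_nonneg _)

theorem inverse_perturbation_bound (n n₃ : ℕ) [NeZero n₃] (hn : 0 < n)
    (A Ainv E Binv : Fin n → Fin n → ZMod n₃ → ℝ)
    (hA₁ : tProd A Ainv = tId n n₃) (hA₂ : tProd Ainv A = tId n n₃)
    (hB₁ : tProd (A + E) Binv = tId n n₃) (hB₂ : tProd Binv (A + E) = tId n n₃) :
    frobNorm (Ainv - Binv) / frobNorm Ainv ≤
        (frobNorm A * specNorm Binv) * (specNorm E / frobNorm A) ∧
      specNorm (Ainv - Binv) / specNorm Ainv ≤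
        (specNorm A * specNorm Binv) * (specNorm E / specNorm A) :=
  inverse_perturbation_bound_general n n₃ hn A Ainv E Binv hA₁ hB₂
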